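/- Let F be a closure system on a finite set G. Then the lattice ↓F of all closure systems contained in F, ordered by inclusion, is join-semidistributive: for all X, Y, Z ∈ ↓F, X ∨ Y = X ∨ Z implies X ∨ Y = X ∨ (Y ∧ Z). -/
import Mathlib


variable {α : Type*}

/-- A closure system on (the universe of) `α`: contains the full set and is
closed under (nonempty) intersections. -/
def IsClosureSystem (F : Set (Set α)) : Prop :=
  Set.univ ∈ F ∧ ∀ S ⊆ F, S.Nonempty → ⋂₀ S ∈ F

/-- `R` is a closure system contained in `F` (an element of the ideal `↓F`). -/
def DownF (F R : Set (Set α)) : Prop := IsClosureSystem R ∧ R ⊆ F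

/-- Models of the implication `A → B`. -/
def FAB (A B : Set α) : Set (Set α) := {D | ¬ A ⊆ D ∨ B ⊆ D}

/-- Closure operator of a closure system `R`. -/
def clOp (R : Set (Set α)) (X : Set α) : Set α := ⋂₀ {D | D ∈ R ∧ X ⊆ D}

/-- The closure system contained in `F` generated by the family `X`. -/
def genCS (F X : Set (Set α)) : Set (Set α) :=
  ⋂₀ {T | IsClosureSystem T ∧ T ⊆ F ∧ X ⊆ T}

/-- `R'` is covered by `R` in the lattice `↓F` of closure systems contained in `F`. -/
def CoversIn (F R' R : Set (Set α)) : Prop :=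
  DownF F R' ∧ DownF F R ∧ R' ⊂ R ∧ ¬ ∃ T, DownF F T ∧ R' ⊂ T ∧ T ⊂ R

/-- `A` is covered by `B` in the lattice `(F, ⊆)`. -/
def CoversF (F : Set (Set α)) (A B : Set α) : Prop :=
  A ∈ F ∧ B ∈ F ∧ A ⊂ B ∧ ¬ ∃ C ∈ F, A ⊂ C ∧ C ⊂ B

/-- `A` is meet-irreducible in the lattice `(R, ⊆)` of a closure system `R`. -/
def MeetIrredSet (R : Set (Set α)) (A : Set α) : Prop :=
  A ∈ R ∧ A ≠ Set.univ ∧ ¬ ∃ B ∈ R, ∃ C ∈ R, A ⊂ B ∧ A ⊂ C ∧ A = B ∩ C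

/-- `R` is meet-irreducible in the lattice `↓F`. -/
def MeetIrredDown (F R : Set (Set α)) : Prop :=
  DownF F R ∧ R ≠ F ∧ ¬ ∃ T, DownF F T ∧ ∃ U, DownF F U ∧ R ⊂ T ∧ R ⊂ U ∧ R = T ∩ U

/-- `R` is join-irreducible in the lattice `↓F` (bottom is `{univ}`,
join of a family is the generated closure system). -/
def JoinIrredDown (F R : Set (Set α)) : Prop :=
  DownF F R ∧ R ≠ {Set.univ} ∧
    ∀ Y : Set (Set (Set α)), Y.Finite → (∀ T ∈ Y, DownF F T) →
      R = genCS F (⋃₀ Y) → R ∈ Y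

open Set

lemma clOp_mem {R : Set (Set α)} (hR : IsClosureSystem R) (E : Set α) :
    clOp R E ∈ R := by
  apply hR.2 _ (fun D hD => hD.1)
  exact ⟨univ, hR.1, subset_univ E⟩

lemma subset_clOp (R : Set (Set α)) (E : Set α) : E ⊆ clOp R E :=
  subset_sInter (fun D hD => hD.2)

lemma clOp_subset {R : Set (Set α)} {D E : Set α} (hD : D ∈ R) (hsub : E ⊆ D) :
    clOp R E ⊆ D := sInter_subset_of_mem ⟨hD, hsub⟩

lemma clOp_mono (R : Set (Set α)) {E E' : Set α} (hsub : E ⊆ E') :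
    clOp R E ⊆ clOp R E' :=
  subset_sInter (fun D hD => sInter_subset_of_mem ⟨hD.1, hsub.trans hD.2⟩)

lemma genCS_eq {F X Y : Set (Set α)} (hF : IsClosureSystem F)
    (hX : DownF F X) (hY : DownF F Y) :
    genCS F (X ∪ Y) = {D | ∃ x ∈ X, ∃ y ∈ Y, D = x ∩ y} := by
  set P : Set (Set α) := {D | ∃ x ∈ X, ∃ y ∈ Y, D = x ∩ y} with hP
  have hPcs : IsClosureSystem P := by
    constructor
    · exact ⟨univ, hX.1.1, univ, hY.1.1, (univ_inter _).symm⟩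
    · intro S hS hSne
      refine ⟨clOp X (⋂₀ S), clOp_mem hX.1 _, clOp Y (⋂₀ S), clOp_mem hY.1 _, ?_⟩
      apply subset_antisymm
      · exact subset_inter (subset_clOp _ _) (subset_clOp _ _)
      · intro a ha s hs
        obtain ⟨x, hx, y, hy, rfl⟩ := hS hs
        have hIx : clOp X (⋂₀ S) ⊆ x := clOp_subset hx
          ((sInter_subset_of_mem hs).trans inter_subset_left)
        have hIy : clOp Y (⋂₀ S) ⊆ y := clOp_subset hy
          ((sInter_subset_of_mem hs).trans inter_subset_right)
        exact ⟨hIx ha.1, hIy ha.2⟩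
  have hPF : P ⊆ F := by
    rintro D ⟨x, hx, y, hy, rfl⟩
    have : ⋂₀ {x, y} ∈ F := by
      apply hF.2
      · intro s hs
        rcases hs with rfl | rfl
        · exact hX.2 hx
        · exact hY.2 hy
      · exact ⟨x, by simp⟩
    rwa [sInter_pair] at this
  have hXYP : X ∪ Y ⊆ P := by
    rintro D (hD | hD)
    · exact ⟨D, hD, univ, hY.1.1, (inter_univ _).symm⟩
    · exact ⟨univ, hX.1.1, D, hD, (univ_inter _).symm⟩
  apply subset_antisymm
  · exact sInter_subset_of_mem ⟨hPcs, hPF, hXYP⟩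
  · apply subset_sInter
    rintro T ⟨hTcs, _, hXYT⟩
    rintro D ⟨x, hx, y, hy, rfl⟩
    have : ⋂₀ {x, y} ∈ T := by
      apply hTcs.2
      · intro s hs
        rcases hs with rfl | rfl
        · exact hXYT (Or.inl hx)
        · exact hXYT (Or.inr hy)
      · exact ⟨x, by simp⟩
    rwa [sInter_pair] at this

lemma step_lemma {F X W : Set (Set α)} (hF : IsClosureSystem F)
    (hX : DownF F X) (hW : DownF F W) {D E : Set α}
    (hE : E ∈ genCS F (X ∪ W)) (hDE : D ⊆ E) (hcl : clOp X D ∩ E = D) :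
    clOp W E ∈ W ∧ E ⊆ clOp W E ∧ clOp X D ∩ clOp W E = D := by
  rw [genCS_eq hF hX hW] at hE
  obtain ⟨x, hx, w, hw, rfl⟩ := hE
  refine ⟨clOp_mem hW.1 _, subset_clOp _ _, ?_⟩
  apply subset_antisymm
  · intro a ⟨ha1, ha2⟩
    rw [← hcl]
    have hax : a ∈ x := clOp_subset hx (hDE.trans inter_subset_left) ha1
    have haw : a ∈ w := clOp_subset hw inter_subset_right ha2
    exact ⟨ha1, hax, haw⟩
  · exact subset_inter (subset_clOp _ _) (hDE.trans (subset_clOp _ _))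

/-- ↓F is join-semidistributive. -/
theorem stmt_12 {α : Type*} [Fintype α] (F : Set (Set α)) (hF : IsClosureSystem F)
    (X Y Z : Set (Set α)) (hX : DownF F X) (hY : DownF F Y) (hZ : DownF F Z)
    (h : genCS F (X ∪ Y) = genCS F (X ∪ Z)) :
    genCS F (X ∪ Y) = genCS F (X ∪ (Y ∩ Z)) := by
  have hYZ : DownF F (Y ∩ Z) := by
    refine ⟨⟨⟨hY.1.1, hZ.1.1⟩, ?_⟩, fun D hD => hY.2 hD.1⟩
    intro S hS hne
    exact ⟨hY.1.2 S (fun s hs => (hS hs).1) hne, hZ.1.2 S (fun s hs => (hS hs).2) hne⟩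
  apply subset_antisymm
  · intro D hD
    set step : Set α → Set α := fun E => clOp Z (clOp Y E) with hstep
    set f : ℕ → Set α := fun n => step^[n] D with hf
    have hfsucc : ∀ n, f (n + 1) = clOp Z (clOp Y (f n)) := by
      intro n
      simp only [hf, Function.iterate_succ_apply', hstep]
    have key : ∀ n, D ⊆ f n ∧ clOp X D ∩ f n = D ∧ f n ∈ genCS F (X ∪ Y) := by
      intro n
      induction n with
      | zero =>
        refine ⟨subset_rfl, ?_, hD⟩
        exact subset_antisymm inter_subset_right
          (subset_inter (subset_clOp _ _) subset_rfl)
      | succ n ih =>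
        obtain ⟨h1, h2, h3⟩ := ih
        obtain ⟨hy1, hy2, hy3⟩ := step_lemma hF hX hY h3 h1 h2
        have hmemZ : clOp Y (f n) ∈ genCS F (X ∪ Z) := by
          rw [← h, genCS_eq hF hX hY]
          exact ⟨univ, hX.1.1, _, hy1, (univ_inter _).symm⟩
        obtain ⟨hz1, hz2, hz3⟩ := step_lemma hF hX hZ hmemZ (h1.trans hy2) hy3
        rw [hfsucc n]
        refine ⟨(h1.trans hy2).trans hz2, hz3, ?_⟩
        rw [h, genCS_eq hF hX hZ]
        exact ⟨univ, hX.1.1, _, hz1, (univ_inter _).symm⟩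
    have hmono : Monotone f := by
      apply monotone_nat_of_le_succ
      intro n
      rw [hfsucc n]
      exact (subset_clOp _ _).trans (clOp_mono _ (subset_clOp _ _))
    obtain ⟨m, n, hmn, hfmn⟩ := Finite.exists_ne_map_eq_of_infinite f
    wlog hlt : m < n generalizing m n
    · exact this n m hmn.symm hfmn.symm (hmn.lt_or_gt.resolve_left hlt)
    have hstab : f (m + 1) = f m :=
      subset_antisymm (hfmn ▸ hmono hlt) (hmono (Nat.le_succ m))
    rw [hfsucc m] at hstab
    set E := f m with hE
    have hYE : clOp Y E = E :=
      subset_antisymm ((subset_clOp Z (clOp Y E)).trans hstab.subset) (subset_clOp _ _)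
    have hZE : clOp Z E = E := by rw [hYE] at hstab; exact hstab
    have hEY : E ∈ Y := hYE ▸ clOp_mem hY.1 E
    have hEZ : E ∈ Z := hZE ▸ clOp_mem hZ.1 E
    obtain ⟨h1, h2, _⟩ := key m
    rw [genCS_eq hF hX hYZ]
    exact ⟨clOp X D, clOp_mem hX.1 D, E, ⟨hEY, hEZ⟩, h2.symm⟩
  · rw [genCS_eq hF hX hY, genCS_eq hF hX hYZ]
    rintro D ⟨x, hx, w, hw, rfl⟩
    exact ⟨x, hx, w, hw.1, rfl⟩
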